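/- Let a(t) be differentiable with ‖ȧ(t)‖ ≤ ε for all t, and let ã(t) = â(t) − a(t) where dâ/dt = −αΓã(t) with Γ symmetric positive definite constant and α > 0. Then limsup_{t→∞} ‖ã(t)‖ ≤ ε/(α μ), where μ > 0 is the smallest eigenvalue of Γ. -/

import Mathlib

/-!
With `e = â - a` we have `ė = -αΓe - ȧ`, so `d/dt ‖e‖² = -2α⟪e, Γe⟫ - 2⟪e, ȧ⟫ ≤ -2αμ‖e‖² + 2ε‖e‖`
by the Rayleigh bound `⟪e, Γe⟫ ≥ μ‖e‖²` and Cauchy–Schwarz. Absorbing the linear term,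
`2ε‖e‖ ≤ αμ‖e‖² + ε²/(αμ)`, gives the linear inequality `g' ≤ -αμ g + ε²/(αμ)` for `g = ‖e‖²`,
and Grönwall's lemma shows that `g` is eventually below any bound exceeding `(ε/(αμ))²`.
-/

open Matrix Filter Topology WithLp
open scoped InnerProductSpace

theorem Matrix.IsHermitian.mul_norm_sq_le_inner_mulVec {n : Type*} [Fintype n] [DecidableEq n]
    {A : Matrix n n ℝ} (hA : A.IsHermitian) {μ : ℝ} (hμ : ∀ i, μ ≤ hA.eigenvalues i)
    (x : n → ℝ) :
    μ * ‖toLp 2 x‖ ^ 2 ≤ ⟪toLp 2 x, toLp 2 (A *ᵥ x)⟫_ℝ := by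
  have hpsd : (A - algebraMap ℝ _ μ).PosSemidef := by
    refine posSemidef_iff_isHermitian_and_spectrum_nonneg.2 ⟨hA.sub ?_, ?_⟩
    · rw [Algebra.algebraMap_eq_smul_one]
      exact isHermitian_one.smul (IsSelfAdjoint.all μ)
    · rw [← spectrum.sub_singleton_eq, hA.spectrum_real_eq_range_eigenvalues]
      rintro _ ⟨_, ⟨i, rfl⟩, _, rfl, rfl⟩
      exact sub_nonneg.2 (hμ i)
  have hquad := hpsd.dotProduct_mulVec_nonneg x
  rw [Algebra.algebraMap_eq_smul_one, sub_mulVec, smul_mulVec, one_mulVec, dotProduct_sub,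
    dotProduct_smul, sub_nonneg, star_trivial] at hquad
  rw [← real_inner_self_eq_norm_sq, EuclideanSpace.inner_eq_star_dotProduct,
    EuclideanSpace.inner_eq_star_dotProduct, star_trivial, dotProduct_comm (A *ᵥ _)]
  simpa using hquad

theorem tendsto_gronwallBound_atTop {δ K ε : ℝ} (hK : K < 0) :
    Tendsto (gronwallBound δ K ε) atTop (𝓝 (-ε / K)) := by
  have hexp : Tendsto (fun x => Real.exp (K * x)) atTop (𝓝 0) :=
    Real.tendsto_exp_atBot.comp (tendsto_id.const_mul_atTop_of_neg hK)
  rw [gronwallBound_of_K_ne_0 hK.ne]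
  convert (hexp.const_mul δ).add ((hexp.sub_const 1).const_mul (ε / K)) using 2
  ring

theorem eventually_lt_of_hasDerivAt_le_neg_mul_add {g g' : ℝ → ℝ} {K C b : ℝ} (hK : 0 < K)
    (hg : ∀ t, HasDerivAt g (g' t) t) (hg' : ∀ t, g' t ≤ -K * g t + C) (hb : C / K < b) :
    ∀ᶠ t in atTop, g t < b := by
  have hcont : Continuous g := continuous_iff_continuousAt.2 fun t => (hg t).continuousAt
  have hbound : ∀ t, 0 ≤ t → g t ≤ gronwallBound (g 0) (-K) C t := fun t ht => by
    simpa using le_gronwallBound_of_liminf_deriv_right_le hcont.continuousOn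
      (fun x _ r hr => (hg x).hasDerivWithinAt.liminf_right_slope_le hr) le_rfl
      (fun x _ => hg' x) t ⟨ht, le_rfl⟩
  have hlim := tendsto_gronwallBound_atTop (δ := g 0) (ε := C) (neg_lt_zero.2 hK)
  rw [div_neg, neg_div, neg_neg] at hlim
  filter_upwards [hlim.eventually_lt_const hb, eventually_ge_atTop 0] with t hlt ht
  exact (hbound t ht).trans_lt hlt

theorem limsup_norm_le_of_inner_deriv_le {E : Type*} [NormedAddCommGroup E]
    [InnerProductSpace ℝ E] {e e' : ℝ → E} {K ε : ℝ} (hK : 0 < K) (hε : 0 ≤ ε)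
    (he : ∀ t, HasDerivAt e (e' t) t)
    (hdiss : ∀ t, ⟪e t, e' t⟫_ℝ ≤ -K * ‖e t‖ ^ 2 + ε * ‖e t‖) :
    limsup (fun t => ‖e t‖) atTop ≤ ε / K := by
  refine le_of_forall_gt_imp_ge_of_dense fun b hb => ?_
  have hεK : 0 ≤ ε / K := div_nonneg hε hK.le
  have hlin : ∀ t, 2 * ⟪e t, e' t⟫_ℝ ≤ -K * ‖e t‖ ^ 2 + ε ^ 2 / K := fun t => by
    have hamgm : 2 * ε * ‖e t‖ ≤ K * ‖e t‖ ^ 2 + ε ^ 2 / K := by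
      have hsquare :
          K * ‖e t‖ ^ 2 + ε ^ 2 / K - 2 * ε * ‖e t‖ = (K * ‖e t‖ - ε) ^ 2 / K := by
        field_simp
        ring
      linarith [div_nonneg (sq_nonneg (K * ‖e t‖ - ε)) hK.le]
    linarith [hdiss t]
  have hb_sq : ε ^ 2 / K / K < b ^ 2 := by
    rw [div_div, ← sq, ← div_pow]
    exact pow_lt_pow_left₀ hb hεK two_ne_zero
  have hev := eventually_lt_of_hasDerivAt_le_neg_mul_add hK (fun t => (he t).norm_sq) hlin hb_sq
  refine limsup_le_of_le (isCoboundedUnder_le_of_le atTop fun t => norm_nonneg _) ?_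
  filter_upwards [hev] with t ht
  exact (lt_of_pow_lt_pow_left₀ 2 (hεK.trans hb.le) ht).le

/-- if the true parameter drifts with rate at most ε and
dâ/dt = −αΓã with Γ constant symmetric positive definite, then
limsup_{t→∞} ‖ã(t)‖ ≤ ε/(αμ), μ the smallest eigenvalue of Γ. -/
theorem slowly_varying_parameter_tracking (m : ℕ) (α ε : ℝ)
    (hα : 0 < α) (hε : 0 ≤ ε)
    (Γ : Matrix (Fin m) (Fin m) ℝ) (hΓ : Γ.PosDef)
    (μ : ℝ) (hμ : IsLeast (Set.range hΓ.isHermitian.eigenvalues) μ)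
    (a ahat : ℝ → Fin m → ℝ) (a' : ℝ → Fin m → ℝ)
    (hda : ∀ t, HasDerivAt a (a' t) t)
    (hdrift : ∀ t, Real.sqrt (∑ i, (a' t i) ^ 2) ≤ ε)
    (hadapt : ∀ t, HasDerivAt ahat ((-α) • (Γ *ᵥ (ahat t - a t))) t) :
    Filter.limsup (fun t => Real.sqrt (∑ i, (ahat t i - a t i) ^ 2)) atTop
      ≤ ε / (α * μ) := by
  obtain ⟨i₀, hi₀⟩ := hμ.1
  have hμpos : 0 < μ := hi₀ ▸ hΓ.eigenvalues_pos i₀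
  have hnorm (v : Fin m → ℝ) : ‖toLp 2 v‖ = √(∑ i, v i ^ 2) := by
    simp [EuclideanSpace.norm_eq]
  have he (t : ℝ) : HasDerivAt (fun t => toLp 2 (ahat t - a t))
      (toLp 2 ((-α) • (Γ *ᵥ (ahat t - a t)) - a' t)) t :=
    (PiLp.hasFDerivAt_toLp 2 _).comp_hasDerivAt t ((hadapt t).sub (hda t))
  have hdiss (t : ℝ) :
      ⟪toLp 2 (ahat t - a t), toLp 2 ((-α) • (Γ *ᵥ (ahat t - a t)) - a' t)⟫_ℝ ≤
        -(α * μ) * ‖toLp 2 (ahat t - a t)‖ ^ 2 + ε * ‖toLp 2 (ahat t - a t)‖ := by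
    have hcoer := hΓ.isHermitian.mul_norm_sq_le_inner_mulVec (fun i => hμ.2 ⟨i, rfl⟩)
      (ahat t - a t)
    have hcs :=
      neg_le_of_abs_le (abs_real_inner_le_norm (toLp 2 (ahat t - a t)) (toLp 2 (a' t)))
    rw [toLp_sub _ _ (a' t), toLp_smul, inner_sub_right, inner_smul_right]
    linarith [mul_le_mul_of_nonneg_left hcoer hα.le,
      mul_le_mul_of_nonneg_left (hnorm (a' t) ▸ hdrift t) (norm_nonneg (toLp 2 (ahat t - a t)))]
  simpa only [hnorm, Pi.sub_apply] using
    limsup_norm_le_of_inner_deriv_le (mul_pos hα hμpos) hε he hdiss
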